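/- Let A be an n×n complex matrix of index k, let m ≥ 1 be an integer, and let l be an integer with l ≥ k. Then A^{#_m} = A^l (A^{l+m+1})† A^m P_{A^m}. -/

import Mathlib

open Matrix

/-- `X` is the Moore–Penrose inverse of `A` (four Penrose equations). -/
def MoorePenroseOf {n : ℕ} (A X : Matrix (Fin n) (Fin n) ℂ) : Prop :=
  A * X * A = A ∧ X * A * X = X ∧ (A * X)ᴴ = A * X ∧ (X * A)ᴴ = X * A

/-- Column space of a square complex matrix. -/
noncomputable def colSpace {n : ℕ} (A : Matrix (Fin n) (Fin n) ℂ) : Submodule ℂ (Fin n → ℂ) :=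
  LinearMap.range A.mulVecLin

/-- Null space of a square complex matrix. -/
noncomputable def nullSpace {n : ℕ} (A : Matrix (Fin n) (Fin n) ℂ) : Submodule ℂ (Fin n → ℂ) :=
  LinearMap.ker A.mulVecLin

/-- `k` is the index of `A`: the smallest nonnegative integer with
`rank(A^k) = rank(A^(k+1))`. -/
def HasIndex {n : ℕ} (A : Matrix (Fin n) (Fin n) ℂ) (k : ℕ) : Prop :=
  (A ^ k).rank = (A ^ (k + 1)).rank ∧ ∀ j < k, (A ^ j).rank ≠ (A ^ (j + 1)).rank

/-- `X` is the core-EP inverse of `A` (where `k = Ind(A)`): `XAX = X` and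
`R(X) = R(Xᴴ) = R(A^k)`. -/
def IsCoreEP {n : ℕ} (A X : Matrix (Fin n) (Fin n) ℂ) (k : ℕ) : Prop :=
  X * A * X = X ∧ colSpace X = colSpace (A ^ k) ∧ colSpace Xᴴ = colSpace (A ^ k)

/-!
Write `X = A⊕`. Since `XAX = X` and `R(A^k) ⊆ R(X)`, `XA` fixes `R(A^k)`, so `X A^(j+1) = A^j`
for `j ≥ k` and hence `X^(m+1) A^(l+m+1) = A^l`. On the other side, `A^(l+m+1) (A^(l+m+1))†` is
the orthogonal projector onto `R(A^(l+m+1)) = R(A^k) = R(Xᴴ)`, so `X` absorbs it from the right.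
Together, `(A⊕)^(m+1) = A^l (A^(l+m+1))†`, already before multiplying by `A^m P_{A^m}`.
-/

section ColSpace

variable {n : ℕ}

lemma colSpace_mul_le (M N : Matrix (Fin n) (Fin n) ℂ) : colSpace (M * N) ≤ colSpace M := by
  rw [colSpace, colSpace, mulVecLin_mul]
  exact LinearMap.range_comp_le_range _ _

lemma colSpace_mul (M N : Matrix (Fin n) (Fin n) ℂ) :
    colSpace (M * N) = (colSpace N).map M.mulVecLin := by
  rw [colSpace, colSpace, mulVecLin_mul, LinearMap.range_comp]

lemma mul_eq_of_colSpace_le {P M N : Matrix (Fin n) (Fin n) ℂ} (hPM : P * M = M)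
    (hNM : colSpace N ≤ colSpace M) : P * N = N := by
  refine ext_iff_mulVec.2 fun v ↦ ?_
  obtain ⟨w, hw⟩ := hNM (LinearMap.mem_range_self N.mulVecLin v)
  simp only [mulVecLin_apply] at hw
  rw [← mulVec_mulVec, ← hw, mulVec_mulVec, hPM]

lemma colSpace_pow_eq_of_rank_eq {A : Matrix (Fin n) (Fin n) ℂ} {k : ℕ}
    (hA : (A ^ k).rank = (A ^ (k + 1)).rank) {j : ℕ} (hj : k ≤ j) :
    colSpace (A ^ j) = colSpace (A ^ k) := by
  have hsucc : colSpace (A ^ (k + 1)) = colSpace (A ^ k) := by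
    refine Submodule.eq_of_le_of_finrank_eq ?_ hA.symm
    rw [pow_succ]
    exact colSpace_mul_le _ _
  induction j, hj using Nat.le_induction with
  | base => rfl
  | succ j _ ih => rw [pow_succ', colSpace_mul, ih, ← colSpace_mul, ← pow_succ', hsucc]

end ColSpace

namespace IsCoreEP

variable {n k : ℕ} {A X : Matrix (Fin n) (Fin n) ℂ}

lemma mul_pow_succ (hX : IsCoreEP A X k) {j : ℕ} (hj : k ≤ j) : X * A ^ (j + 1) = A ^ j := by
  have hk : X * A * A ^ k = A ^ k := mul_eq_of_colSpace_le hX.1 hX.2.1.ge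
  obtain ⟨t, rfl⟩ := Nat.exists_eq_add_of_le hj
  rw [add_right_comm, pow_add, pow_succ', ← mul_assoc, ← mul_assoc, hk, pow_add]

lemma pow_mul_pow_add (hX : IsCoreEP A X k) {l : ℕ} (hl : k ≤ l) (i : ℕ) :
    X ^ i * A ^ (l + i) = A ^ l := by
  induction i with
  | zero => simp
  | succ i ih =>
    rw [pow_succ, mul_assoc, ← add_assoc, hX.mul_pow_succ (hl.trans (Nat.le_add_right l i)), ih]

lemma mul_mul_moorePenrose (hX : IsCoreEP A X k) (hA : (A ^ k).rank = (A ^ (k + 1)).rank)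
    {p : ℕ} (hp : k ≤ p) {B : Matrix (Fin n) (Fin n) ℂ} (hB : MoorePenroseOf (A ^ p) B) :
    X * (A ^ p * B) = X := by
  have hXH : A ^ p * B * Xᴴ = Xᴴ := by
    refine mul_eq_of_colSpace_le hB.1 ?_
    rw [hX.2.2, colSpace_pow_eq_of_rank_eq hA hp]
  simpa only [conjTranspose_mul, conjTranspose_conjTranspose, hB.2.2.1]
    using congrArg conjTranspose hXH

theorem pow_succ_eq (hX : IsCoreEP A X k) (hA : (A ^ k).rank = (A ^ (k + 1)).rank)
    {l j : ℕ} (hl : k ≤ l) {B : Matrix (Fin n) (Fin n) ℂ}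
    (hB : MoorePenroseOf (A ^ (l + j + 1)) B) :
    X ^ (j + 1) = A ^ l * B :=
  calc X ^ (j + 1) = X ^ (j + 1) * (A ^ (l + (j + 1)) * B) := by
        rw [pow_succ, mul_assoc, ← add_assoc, hX.mul_mul_moorePenrose hA (by omega) hB]
    _ = A ^ l * B := by rw [← mul_assoc, hX.pow_mul_pow_add hl]

end IsCoreEP

theorem stmt_8_general {n k m l : ℕ} (hl : k ≤ l)
    (A CEP AmDag B : Matrix (Fin n) (Fin n) ℂ)
    (hInd : HasIndex A k)
    (hCEP : IsCoreEP A CEP k)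
    (hMPB : MoorePenroseOf (A ^ (l + m + 1)) B) :
    CEP ^ (m + 1) * A ^ m * (A ^ m * AmDag) =
      A ^ l * B * A ^ m * (A ^ m * AmDag) := by
  rw [hCEP.pow_succ_eq hInd.1 hl hMPB]

/-- for `l ≥ k`, `A^{#_m} = A^l (A^{l+m+1})† A^m P_{A^m}`. -/
theorem stmt_8 {n k m l : ℕ} (hm : 1 ≤ m) (hl : k ≤ l)
    (A CEP AmDag B : Matrix (Fin n) (Fin n) ℂ)
    (hInd : HasIndex A k)
    (hCEP : IsCoreEP A CEP k)
    (hMPm : MoorePenroseOf (A ^ m) AmDag)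
    (hMPB : MoorePenroseOf (A ^ (l + m + 1)) B) :
    CEP ^ (m + 1) * A ^ m * (A ^ m * AmDag) =
      A ^ l * B * A ^ m * (A ^ m * AmDag) :=
  stmt_8_general hl A CEP AmDag B hInd hCEP hMPB
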